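/- arXiv:1609.02928 — 4 statements merged into one kernel-verified Lean document; each statement's English description precedes it below -/
import Mathlib

section
/- Let X ⊆ ℝ² be a polytope with exactly n_v vertices (extreme points). Then there exists a finite set D ⊆ ℝ² of directions with |D| ≤ 3·n_v such that D determines X within the class of all polytopes in ℝ² having exactly n_v extreme points. (This is the determination content of the convergence of Algorithm 1 in the case where the upper bound n̄ on the number of vertices equals n_v: the algorithm terminates after at most 3n_v oracle calls with S_v = X_v.) -/
open RealInnerProductSpace

/-- Support function of a subset of `ℝⁿ`. -/
noncomputable def supp {n : ℕ} (X : Set (EuclideanSpace ℝ (Fin n)))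
    (d : EuclideanSpace ℝ (Fin n)) : ℝ :=
  sSup ((fun v => ⟪v, d⟫) '' X)

/-- `X` is a polytope: the convex hull of a nonempty finite set. -/
def IsPolytope {n : ℕ} (X : Set (EuclideanSpace ℝ (Fin n))) : Prop :=
  ∃ F : Finset (EuclideanSpace ℝ (Fin n)), F.Nonempty ∧ X = convexHull ℝ (F : Set _)

/-- The finite direction set `D` determines `X` within the class `𝒞`. -/
def Determines {n : ℕ} (𝒞 : Set (Set (EuclideanSpace ℝ (Fin n))))
    (D : Finset (EuclideanSpace ℝ (Fin n))) (X : Set (EuclideanSpace ℝ (Fin n))) : Prop :=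
  ∀ Y ∈ 𝒞, (∀ d ∈ D, supp Y d = supp X d) → Y = X

/-!
For every vertex `q` take a direction exposing it, and for every vertex `u` the outer normal of
an edge from `u` to another vertex with all of `X` on its left: at most `2 n_v` directions (three
for a single point). A polytope `Y` with the same support values lies in the corresponding
half-planes, which in the plane cut out `X`, so `Y ⊆ X`. A maximiser over `Y` of the direction
exposing `q` then maximises it over `X`, hence is `q`; so every vertex of `X` lies in `Y`, and
`X ⊆ Y`.

The half-planes cut out `X`: seen from a point `z ∉ X`, the vertices lie in an open half-plane.
If the angularly extreme vertex `m` is alone on its ray from `z`, the other vertices lie strictly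
on one side of the line `zm`, and the edge leaving `m` separates `z` from `X`. Otherwise two
vertices lie on a common ray from `z`, and the direction exposing the nearer one separates `z`.
-/

open Set

section InnerProductSpace

variable {F : Type*} [NormedAddCommGroup F] [InnerProductSpace ℝ F]

lemma isLinearMap_inner_left (d : F) : IsLinearMap ℝ (⟪·, d⟫) :=
  ⟨(inner_add_left · · d), fun c x => real_inner_smul_left x d c⟩

lemma inner_le_of_mem_convexHull {s : Set F} {d x : F} {c : ℝ} (h : ∀ w ∈ s, ⟪w, d⟫ ≤ c)
    (hx : x ∈ convexHull ℝ s) : ⟪x, d⟫ ≤ c :=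
  convexHull_min h (convex_halfSpace_le (isLinearMap_inner_left d) c) hx

lemma inner_lt_of_mem_convexHull {s : Set F} {d x : F} {c : ℝ} (h : ∀ w ∈ s, ⟪w, d⟫ < c)
    (hx : x ∈ convexHull ℝ s) : ⟪x, d⟫ < c :=
  convexHull_min h (convex_halfSpace_lt (isLinearMap_inner_left d) c) hx

lemma notMem_openSegment_of_inner_le_of_inner_lt {x y z d : F} (hz : ⟪z, d⟫ ≤ ⟪x, d⟫)
    (hy : ⟪y, d⟫ < ⟪x, d⟫) : x ∉ openSegment ℝ z y := by
  rintro ⟨a, b, ha, hb, hab, rfl⟩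
  simp only [inner_add_left, real_inner_smul_left] at hz hy
  obtain rfl : a = 1 - b := eq_sub_of_add_eq hab
  have h₁ : ⟪z, d⟫ ≤ ⟪y, d⟫ := le_of_mul_le_mul_left (by linarith) hb
  have h₂ : ⟪y, d⟫ < ⟪z, d⟫ := lt_of_mul_lt_mul_left (by linarith) ha.le
  linarith

lemma eq_of_mem_convexHull_of_inner_le {s : Set F} {q x d : F} (hq : q ∈ s)
    (hexp : ∀ w ∈ s, w ≠ q → ⟪w, d⟫ < ⟪q, d⟫) (hx : x ∈ convexHull ℝ s)
    (hxd : ⟪q, d⟫ ≤ ⟪x, d⟫) : x = q := by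
  rcases (s \ {q}).eq_empty_or_nonempty with hs | hs
  · simpa using convexHull_mono (sdiff_eq_empty.1 hs) hx
  rw [← insert_eq_of_mem hq, ← insert_sdiff_singleton, convexHull_insert hs,
    mem_convexJoin] at hx
  obtain ⟨q', rfl, y, hy, hxy⟩ := hx
  have hyd : ⟪y, d⟫ < ⟪q', d⟫ := inner_lt_of_mem_convexHull (fun w hw => hexp w hw.1 hw.2) hy
  rw [← insert_endpoints_openSegment] at hxy
  rcases hxy with rfl | rfl | hxy
  · rfl
  · exact absurd hxd hyd.not_ge
  · exact absurd hxy (notMem_openSegment_of_inner_le_of_inner_lt hxd (hyd.trans_le hxd))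

variable [CompleteSpace F]

lemma exists_forall_inner_sub_pos {K : Set F} (hK : Convex ℝ K) (hKc : IsClosed K) {z : F}
    (hz : z ∉ K) : ∃ e : F, ∀ w ∈ K, 0 < ⟪e, w - z⟫ := by
  obtain ⟨f, u, hfz, hfK⟩ := geometric_hahn_banach_point_closed hK hKc hz
  refine ⟨(InnerProductSpace.toDual ℝ F).symm f, fun w hw => ?_⟩
  rw [inner_sub_right, InnerProductSpace.toDual_symm_apply, InnerProductSpace.toDual_symm_apply]
  linarith [hfK w hw]

lemma exists_inner_lt_of_notMem_convexHull {s : Set F} (hs : s.Finite) {q : F}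
    (hq : q ∉ convexHull ℝ (s \ {q})) : ∃ d : F, ∀ w ∈ s, w ≠ q → ⟪w, d⟫ < ⟪q, d⟫ := by
  obtain ⟨e, he⟩ := exists_forall_inner_sub_pos (convex_convexHull ℝ _)
    ((hs.subset sdiff_subset).isClosed_convexHull ℝ) hq
  refine ⟨-e, fun w hw hwq => ?_⟩
  have := he w (subset_convexHull ℝ _ ⟨hw, hwq⟩)
  rw [inner_sub_right] at this
  rw [inner_neg_right, inner_neg_right, real_inner_comm e w, real_inner_comm e q]
  linarith

end InnerProductSpace

namespace IsPolytope

variable {n : ℕ} {X : Set (EuclideanSpace ℝ (Fin n))}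

lemma isCompact (hX : IsPolytope X) : IsCompact X := by
  obtain ⟨F, -, rfl⟩ := hX
  exact F.finite_toSet.isCompact_convexHull (𝕜 := ℝ)

lemma convex (hX : IsPolytope X) : Convex ℝ X := by
  obtain ⟨F, -, rfl⟩ := hX
  exact convex_convexHull ℝ _

lemma nonempty (hX : IsPolytope X) : X.Nonempty := by
  obtain ⟨F, hF, rfl⟩ := hX
  exact convexHull_nonempty_iff.2 (Finset.coe_nonempty.2 hF)

lemma finite_extremePoints (hX : IsPolytope X) : (X.extremePoints ℝ).Finite := by
  obtain ⟨F, -, rfl⟩ := hX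
  exact F.finite_toSet.subset extremePoints_convexHull_subset

lemma convexHull_extremePoints (hX : IsPolytope X) : convexHull ℝ (X.extremePoints ℝ) = X := by
  rw [← (hX.finite_extremePoints.isClosed_convexHull ℝ).closure_eq,
    closure_convexHull_extremePoints hX.isCompact hX.convex]

lemma extremePoints_nonempty (hX : IsPolytope X) : (X.extremePoints ℝ).Nonempty := by
  rw [← convexHull_nonempty_iff (𝕜 := ℝ), hX.convexHull_extremePoints]
  exact hX.nonempty

lemma isGreatest_supp (hX : IsPolytope X) (d : EuclideanSpace ℝ (Fin n)) :
    IsGreatest ((⟪·, d⟫) '' X) (supp X d) :=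
  (hX.isCompact.image (continuous_id.inner continuous_const)).isGreatest_sSup
    (hX.nonempty.image _)

lemma supp_le (hX : IsPolytope X) {d : EuclideanSpace ℝ (Fin n)} {c : ℝ}
    (h : ∀ v ∈ X.extremePoints ℝ, ⟪v, d⟫ ≤ c) : supp X d ≤ c := by
  obtain ⟨x, hx, hxd⟩ := (hX.isGreatest_supp d).1
  rw [← hxd]
  exact inner_le_of_mem_convexHull h (hX.convexHull_extremePoints.symm ▸ hx)

lemma exists_inner_lt_of_mem_extremePoints (hX : IsPolytope X) {q : EuclideanSpace ℝ (Fin n)}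
    (hq : q ∈ X.extremePoints ℝ) : ∃ d, ∀ w ∈ X.extremePoints ℝ, w ≠ q → ⟪w, d⟫ < ⟪q, d⟫ := by
  refine exists_inner_lt_of_notMem_convexHull hX.finite_extremePoints fun hq' => ?_
  refine (hX.convex.mem_extremePoints_iff_mem_sdiff_convexHull_sdiff.1 hq).2 ?_
  exact convexHull_mono (sdiff_subset_sdiff_left extremePoints_subset) hq'

end IsPolytope

section Determination

variable {n : ℕ}

def CutsOut (D : Finset (EuclideanSpace ℝ (Fin n))) (X : Set (EuclideanSpace ℝ (Fin n))) : Prop :=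
  ∀ z, (∀ d ∈ D, ⟪z, d⟫ ≤ supp X d) → z ∈ X

def ExposesExtremePoints (D : Finset (EuclideanSpace ℝ (Fin n)))
    (X : Set (EuclideanSpace ℝ (Fin n))) : Prop :=
  ∀ q ∈ X.extremePoints ℝ, ∃ d ∈ D, ∀ x ∈ X, ⟪q, d⟫ ≤ ⟪x, d⟫ → x = q

lemma Determines.mono {𝒞 𝒞' : Set (Set (EuclideanSpace ℝ (Fin n)))}
    {D : Finset (EuclideanSpace ℝ (Fin n))} {X : Set (EuclideanSpace ℝ (Fin n))}
    (h : 𝒞' ⊆ 𝒞) (hD : Determines 𝒞 D X) : Determines 𝒞' D X :=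
  fun Y hY => hD Y (h hY)

lemma IsPolytope.determines {D : Finset (EuclideanSpace ℝ (Fin n))}
    {X : Set (EuclideanSpace ℝ (Fin n))} (hX : IsPolytope X) (hcut : CutsOut D X)
    (hexp : ExposesExtremePoints D X) : Determines {Y | IsPolytope Y} D X := by
  intro Y hY hYX
  have hYsub : Y ⊆ X := fun y hy =>
    hcut y fun d hd => hYX d hd ▸ (hY.isGreatest_supp d).2 ⟨y, hy, rfl⟩
  refine hYsub.antisymm ?_
  rw [← hX.convexHull_extremePoints]
  refine convexHull_min (fun q hq => ?_) hY.convex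
  obtain ⟨d, hd, hq_unique⟩ := hexp q hq
  obtain ⟨y, hy, hyd⟩ := (hY.isGreatest_supp d).1
  have hqy : ⟪q, d⟫ ≤ ⟪y, d⟫ := by
    rw [show ⟪y, d⟫ = supp Y d from hyd, hYX d hd]
    exact (hX.isGreatest_supp d).2 ⟨q, extremePoints_subset hq, rfl⟩
  exact hq_unique y (hYsub hy) hqy ▸ hy

end Determination

namespace Orientation

variable {E : Type*} [NormedAddCommGroup E] [InnerProductSpace ℝ E]
  [Fact (Module.finrank ℝ E = 2)] (o : Orientation ℝ E (Fin 2))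

local notation "ω" => o.areaForm
local notation "J" => o.rightAngleRotation

/- On the half-plane `0 < ⟪e, x⟫`, `ω e x / ⟪e, x⟫` is the tangent of the angle from `e` to `x`,
so `ω x y` has the sign of the difference of these tangents and angular order is a real order. -/
lemma exists_pos_areaForm_eq_mul_sub {e x y : E} (hx : 0 < ⟪e, x⟫) (hy : 0 < ⟪e, y⟫) :
    ∃ c > 0, ω x y = c * (ω e y / ⟪e, y⟫ - ω e x / ⟪e, x⟫) := by
  have he : 0 < ‖e‖ := norm_pos_iff.2 (by rintro rfl; simp at hx)
  refine ⟨⟪e, x⟫ * ⟪e, y⟫ / ‖e‖ ^ 2, by positivity, ?_⟩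
  have := o.inner_mul_areaForm_sub e x y
  field_simp
  linarith

lemma sameRay_of_areaForm_eq_zero {e x y : E} (h : ω x y = 0) (hx : 0 < ⟪e, x⟫)
    (hy : 0 ≤ ⟪e, y⟫) : SameRay ℝ x y := by
  refine (o.nonneg_inner_and_areaForm_eq_zero_iff_sameRay x y).1 ⟨?_, h⟩
  have := o.inner_mul_inner_add_areaForm_mul_areaForm x e y
  rw [h, mul_zero, add_zero, real_inner_comm] at this
  exact nonneg_of_mul_nonneg_right (this ▸ by positivity) hx

lemma mem_openSegment_or_mem_openSegment_of_areaForm_eq_zero {e x y z : E}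
    (h : ω (x - z) (y - z) = 0) (hx : 0 < ⟪e, x - z⟫) (hy : 0 < ⟪e, y - z⟫) (hxy : x ≠ y) :
    x ∈ openSegment ℝ z y ∨ y ∈ openSegment ℝ z x := by
  have hxz : x ≠ z := by rintro rfl; simp at hx
  have hyz : y ≠ z := by rintro rfl; simp at hy
  have hray : SameRay ℝ (x - z) (y - z) := o.sameRay_of_areaForm_eq_zero h hx hy.le
  rcases wbtw_total_of_sameRay_vsub_left (x := z) (y := x) (z := y) hray with h | h
  · exact .inl (mem_openSegment_of_ne_left_right hxz.symm hxy.symm (mem_segment_iff_wbtw.2 h))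
  · exact .inr (mem_openSegment_of_ne_left_right hyz.symm hxy (mem_segment_iff_wbtw.2 h))

lemma inner_rightAngleRotation_sub_le_iff (u w x : E) :
    ⟪x, J (u - w)⟫ ≤ ⟪u, J (u - w)⟫ ↔ 0 ≤ ω (w - u) (x - u) := by
  rw [inner_rightAngleRotation_right, inner_rightAngleRotation_right]
  simp only [map_sub, LinearMap.sub_apply, areaForm_apply_self]
  rw [o.areaForm_swap u x, o.areaForm_swap w x, o.areaForm_swap w u]
  constructor <;> intro h <;> linarith

lemma exists_forall_areaForm_nonneg {V : Finset E} {u a : E} (hV : ∃ w ∈ V, w ≠ u)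
    (ha : ∀ w ∈ V, w ≠ u → ⟪w, a⟫ < ⟪u, a⟫) :
    ∃ w ∈ V, w ≠ u ∧ ∀ x ∈ V, 0 ≤ ω (w - u) (x - u) := by
  classical
  have hpos : ∀ w ∈ V.erase u, 0 < ⟪-a, w - u⟫ := by
    intro w hw
    rw [inner_neg_left, inner_sub_right, real_inner_comm w a, real_inner_comm u a]
    linarith [ha w (V.mem_of_mem_erase hw) (V.ne_of_mem_erase hw)]
  obtain ⟨w, hw, hmin⟩ := (V.erase u).exists_min_image (fun x => ω (-a) (x - u) / ⟪-a, x - u⟫)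
    (let ⟨w, hw, hwu⟩ := hV; ⟨w, V.mem_erase.2 ⟨hwu, hw⟩⟩)
  refine ⟨w, V.mem_of_mem_erase hw, V.ne_of_mem_erase hw, fun x hx => ?_⟩
  rcases eq_or_ne x u with rfl | hxu
  · simp
  have hx' : x ∈ V.erase u := V.mem_erase.2 ⟨hxu, hx⟩
  obtain ⟨c, hc, h⟩ := o.exists_pos_areaForm_eq_mul_sub (hpos w hw) (hpos x hx')
  rw [h]
  exact mul_nonneg hc.le (sub_nonneg.2 (hmin x hx'))

lemma mem_convexHull_of_inner_le_of_areaForm_nonneg {V : Finset E} (hV : V.Nonempty)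
    {dir next : E → E} (hdir : ∀ q ∈ V, ∀ w ∈ V, w ≠ q → ⟪w, dir q⟫ < ⟪q, dir q⟫)
    (hnext : ∀ u ∈ V, next u ∈ V ∧ next u ≠ u) {z : E}
    (hz_dir : ∀ q ∈ V, ⟪z, dir q⟫ ≤ ⟪q, dir q⟫)
    (hz_next : ∀ u ∈ V, 0 ≤ ω (next u - u) (z - u)) : z ∈ convexHull ℝ (V : Set E) := by
  have : FiniteDimensional ℝ E := .of_fact_finrank_eq_two
  by_contra hz
  obtain ⟨e, he⟩ := exists_forall_inner_sub_pos (convex_convexHull ℝ _)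
    (V.finite_toSet.isClosed_convexHull ℝ) hz
  have hpos : ∀ w ∈ V, 0 < ⟪e, w - z⟫ := fun w hw => he w (subset_convexHull ℝ _ hw)
  obtain ⟨m, hm, hmax⟩ := V.exists_max_image (fun w => ω e (w - z) / ⟪e, w - z⟫) hV
  by_cases hcol : ∃ w ∈ V, w ≠ m ∧ ω e (w - z) / ⟪e, w - z⟫ = ω e (m - z) / ⟪e, m - z⟫
  · obtain ⟨w, hw, hwm, hslope⟩ := hcol
    obtain ⟨c, -, h⟩ := o.exists_pos_areaForm_eq_mul_sub (hpos m hm) (hpos w hw)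
    rw [hslope, sub_self, mul_zero] at h
    rcases o.mem_openSegment_or_mem_openSegment_of_areaForm_eq_zero h (hpos m hm) (hpos w hw)
      hwm.symm with h | h
    · exact notMem_openSegment_of_inner_le_of_inner_lt (hz_dir m hm) (hdir m hm w hw hwm) h
    · exact notMem_openSegment_of_inner_le_of_inner_lt (hz_dir w hw) (hdir w hw m hm hwm.symm) h
  · push Not at hcol
    obtain ⟨hnV, hnm⟩ := hnext m hm
    obtain ⟨c, hc, h⟩ := o.exists_pos_areaForm_eq_mul_sub (hpos m hm) (hpos _ hnV)
    have hneg : ω (m - z) (next m - z) < 0 :=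
      h ▸ mul_neg_of_pos_of_neg hc (sub_neg.2 ((hmax _ hnV).lt_of_ne (hcol _ hnV hnm)))
    have hswap : ω (next m - m) (z - m) = ω (m - z) (next m - z) := by
      simp only [map_sub, LinearMap.sub_apply, areaForm_apply_self]
      rw [o.areaForm_swap m (next m), o.areaForm_swap z (next m)]
      ring
    linarith [hz_next m hm]

lemma eq_zero_of_inner_nonpos {e x : E} (he : e ≠ 0) (h₁ : ⟪x, e⟫ ≤ 0) (h₂ : ⟪x, J e⟫ ≤ 0)
    (h₃ : ⟪x, -(e + J e)⟫ ≤ 0) : x = 0 := by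
  rw [inner_neg_right, inner_add_right] at h₃
  have he₁ : ⟪e, x⟫ = 0 := by rw [real_inner_comm]; linarith
  have he₂ : ω e x = 0 := by rw [← o.inner_rightAngleRotation_left, real_inner_comm]; linarith
  have := o.inner_sq_add_areaForm_sq e x
  simpa [he₁, he₂, he] using this

end Orientation

section Plane

open scoped EuclideanSpace

local notation "ℝ²" => EuclideanSpace ℝ (Fin 2)

variable {X : Set ℝ²}

lemma IsPolytope.exists_cutsOut_exposesExtremePoints_of_ncard_eq_one
    (o : Orientation ℝ ℝ² (Fin 2)) (hX : IsPolytope X)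
    (h : (X.extremePoints ℝ).ncard = 1) :
    ∃ D : Finset ℝ², D.card ≤ 3 ∧ CutsOut D X ∧ ExposesExtremePoints D X := by
  classical
  obtain ⟨v, hv⟩ := Set.ncard_eq_one.1 h
  obtain rfl : X = {v} := by rw [← hX.convexHull_extremePoints, hv, convexHull_singleton]
  set e : ℝ² := EuclideanSpace.single 0 1
  have he : e ≠ 0 := by simp [e]
  refine ⟨{e, o.rightAngleRotation e, -(e + o.rightAngleRotation e)}, Finset.card_le_three,
    fun z hz => ?_, fun q hq => ?_⟩
  · have hsupp : ∀ d, supp {v} d = ⟪v, d⟫ := by simp [supp]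
    rw [mem_singleton_iff, ← sub_eq_zero]
    refine o.eq_zero_of_inner_nonpos he ?_ ?_ ?_ <;>
      rw [inner_sub_left, sub_nonpos, ← hsupp] <;> exact hz _ (by simp)
  · exact ⟨e, by simp, fun x hx _ => (mem_singleton_iff.1 hx).trans
      (mem_singleton_iff.1 (extremePoints_subset hq)).symm⟩

lemma IsPolytope.exists_cutsOut_exposesExtremePoints_of_two_le
    (o : Orientation ℝ ℝ² (Fin 2)) (hX : IsPolytope X)
    (h : 2 ≤ (X.extremePoints ℝ).ncard) :
    ∃ D : Finset ℝ², D.card ≤ 2 * (X.extremePoints ℝ).ncard ∧ CutsOut D X ∧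
      ExposesExtremePoints D X := by
  classical
  set V := hX.finite_extremePoints.toFinset
  have hmem {w : ℝ²} : w ∈ V ↔ w ∈ X.extremePoints ℝ := hX.finite_extremePoints.mem_toFinset
  have hVX : convexHull ℝ (V : Set ℝ²) = X := by
    rw [hX.finite_extremePoints.coe_toFinset, hX.convexHull_extremePoints]
  have hcard : V.card = (X.extremePoints ℝ).ncard :=
    (Set.ncard_eq_toFinset_card _ hX.finite_extremePoints).symm
  have hdir (q : ℝ²) : ∃ d, q ∈ V → ∀ w ∈ V, w ≠ q → ⟪w, d⟫ < ⟪q, d⟫ := by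
    by_cases hq : q ∈ V
    · obtain ⟨d, hd⟩ := hX.exists_inner_lt_of_mem_extremePoints (hmem.1 hq)
      exact ⟨d, fun _ w hw => hd w (hmem.1 hw)⟩
    · exact ⟨0, fun hq' => (hq hq').elim⟩
  choose dir hdir using hdir
  have hnext (u : ℝ²) : ∃ w, u ∈ V → w ∈ V ∧ w ≠ u ∧ ∀ x ∈ V, 0 ≤ o.areaForm (w - u) (x - u) := by
    by_cases hu : u ∈ V
    · obtain ⟨w, hw⟩ :=
        o.exists_forall_areaForm_nonneg (V.exists_mem_ne (by omega) u) (hdir u hu)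
      exact ⟨w, fun _ => hw⟩
    · exact ⟨u, fun hu' => (hu hu').elim⟩
  choose next hnext using hnext
  set normal : ℝ² → ℝ² := fun u => o.rightAngleRotation (u - next u)
  refine ⟨V.image dir ∪ V.image normal, ?_, fun z hz => ?_, fun q hq => ?_⟩
  · calc _ ≤ (V.image dir).card + (V.image normal).card := Finset.card_union_le _ _
      _ ≤ V.card + V.card := add_le_add Finset.card_image_le Finset.card_image_le
      _ = _ := by rw [hcard, two_mul]
  · rw [← hVX]
    refine o.mem_convexHull_of_inner_le_of_areaForm_nonneg (V.card_pos.1 (by omega)) hdir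
      (fun u hu => ⟨(hnext u hu).1, (hnext u hu).2.1⟩) (fun q hq => ?_) (fun u hu => ?_)
    · refine (hz _ (Finset.mem_union_left _ (Finset.mem_image_of_mem _ hq))).trans
        (hX.supp_le fun w hw => ?_)
      rcases eq_or_ne w q with rfl | hwq
      · exact le_rfl
      · exact (hdir q hq w (hmem.2 hw) hwq).le
    · rw [← o.inner_rightAngleRotation_sub_le_iff]
      exact (hz _ (Finset.mem_union_right _ (Finset.mem_image_of_mem _ hu))).trans
        (hX.supp_le fun w hw =>
          (o.inner_rightAngleRotation_sub_le_iff _ _ _).2 ((hnext u hu).2.2 w (hmem.2 hw)))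
  · refine ⟨dir q, Finset.mem_union_left _ (Finset.mem_image_of_mem _ (hmem.2 hq)),
      fun x hx hqx => ?_⟩
    exact eq_of_mem_convexHull_of_inner_le (hmem.2 hq) (hdir q (hmem.2 hq)) (hVX ▸ hx) hqx

lemma IsPolytope.exists_cutsOut_exposesExtremePoints (hX : IsPolytope X) :
    ∃ D : Finset ℝ², D.card ≤ 3 * (X.extremePoints ℝ).ncard ∧ CutsOut D X ∧
      ExposesExtremePoints D X := by
  let o : Orientation ℝ ℝ² (Fin 2) := (EuclideanSpace.basisFun (Fin 2) ℝ).toBasis.orientation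
  have hpos : 0 < (X.extremePoints ℝ).ncard :=
    (Set.ncard_pos hX.finite_extremePoints).2 hX.extremePoints_nonempty
  rcases Nat.lt_or_ge 1 (X.extremePoints ℝ).ncard with h | h
  · obtain ⟨D, hD, hcut, hexp⟩ := hX.exists_cutsOut_exposesExtremePoints_of_two_le o h
    exact ⟨D, by omega, hcut, hexp⟩
  · obtain ⟨D, hD, hcut, hexp⟩ :=
      hX.exists_cutsOut_exposesExtremePoints_of_ncard_eq_one o (by omega)
    exact ⟨D, by omega, hcut, hexp⟩

end Plane

/-- a polytope `X ⊆ ℝ²` with exactly `n_v` vertices is determined by at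
most `3 n_v` directions within the class of polytopes with exactly `n_v` vertices. -/
theorem stmt_2 (n_v : ℕ) (X : Set (EuclideanSpace ℝ (Fin 2))) (hX : IsPolytope X)
    (hcard : (Set.extremePoints ℝ X).ncard = n_v) :
    ∃ D : Finset (EuclideanSpace ℝ (Fin 2)), D.card ≤ 3 * n_v ∧
      Determines {Y | IsPolytope Y ∧ (Set.extremePoints ℝ Y).ncard = n_v} D X := by
  obtain ⟨D, hD, hcut, hexp⟩ := hX.exists_cutsOut_exposesExtremePoints
  exact ⟨D, hcard ▸ hD, (hX.determines hcut hexp).mono fun Y hY => hY.1⟩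
end

section
/- Let X ⊆ ℝ² be a polytope whose set V of vertices (extreme points) has cardinality n_v ≥ 1, and let W ⊆ V with |W| = n_v - 1 (the already-identified vertices). Let d¹, d² ∈ ℝ² be linearly independent directions whose generated support lines L(dⁱ) = { v ∈ ℝ² : ⟨v, dⁱ⟩ = h_X(dⁱ) } contain no point of W, for i = 1, 2. Then the unique vertex in V \ W is the unique intersection point of L(d¹) and L(d²). (This is the geometric content of the improved stopping rule: when n_v - 1 vertices are identified and two supporting edges are not adjacent to any known vertex, their intersection must be the final vertex.) -/
open RealInnerProductSpace

/-! Each support line of `X` meets `X` in a nonempty compact exposed face, and an extreme point of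
that face is a vertex of `X`. So a support line avoiding the `n_v - 1` known vertices passes through
the remaining vertex `v₀`, whence `h_X(dⁱ) = ⟪v₀, dⁱ⟫` for `i = 1, 2`; the two lines have
independent normals and therefore meet only in `v₀`. -/

theorem IsCompact.exists_mem_extremePoints_isMaxOn {E : Type*} [AddCommGroup E] [Module ℝ E]
    [TopologicalSpace E] [T2Space E] [IsTopologicalAddGroup E] [ContinuousSMul ℝ E]
    [LocallyConvexSpace ℝ E] {s : Set E} (hs : IsCompact s) (hne : s.Nonempty) (l : E →L[ℝ] ℝ) :
    ∃ x ∈ s.extremePoints ℝ, IsMaxOn l s x := by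
  have hexp : IsExposed ℝ s {y ∈ s | ∀ z ∈ s, l z ≤ l y} := fun _ => ⟨l, rfl⟩
  obtain ⟨z, hzs, hz⟩ := hs.exists_isMaxOn hne l.continuous.continuousOn
  obtain ⟨x, hx⟩ := (hexp.isCompact hs).extremePoints_nonempty ⟨z, hzs, fun w hw => hz hw⟩
  exact ⟨x, hexp.isExtreme.extremePoints_subset_extremePoints hx, fun y hy => hx.1.2 y hy⟩

theorem ext_inner_of_linearIndependent {E ι : Type*} [NormedAddCommGroup E]
    [InnerProductSpace ℝ E] [FiniteDimensional ℝ E] [Fintype ι] [Nonempty ι] {d : ι → E}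
    (hd : LinearIndependent ℝ d) (hcard : Fintype.card ι = Module.finrank ℝ E) {x y : E}
    (h : ∀ i, ⟪x, d i⟫ = ⟪y, d i⟫) : x = y :=
  InnerProductSpace.ext_inner_right_basis (basisOfLinearIndependentOfCardEqFinrank hd hcard) <| by
    simpa only [coe_basisOfLinearIndependentOfCardEqFinrank] using h

section Support

variable {n : ℕ} {X : Set (EuclideanSpace ℝ (Fin n))}

theorem IsPolytope.isCompact_s4 (hX : IsPolytope X) : IsCompact X := by
  obtain ⟨F, -, rfl⟩ := hX
  exact F.finite_toSet.isCompact_convexHull (𝕜 := ℝ)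

theorem IsPolytope.nonempty_s4 (hX : IsPolytope X) : X.Nonempty := by
  obtain ⟨F, hF, rfl⟩ := hX
  exact hF.to_set.convexHull (𝕜 := ℝ)

theorem IsPolytope.finite_extremePoints_s4 (hX : IsPolytope X) : (X.extremePoints ℝ).Finite := by
  obtain ⟨F, -, rfl⟩ := hX
  exact F.finite_toSet.subset extremePoints_convexHull_subset

theorem supp_eq_inner_of_isMaxOn {v d : EuclideanSpace ℝ (Fin n)} (hv : v ∈ X)
    (hmax : IsMaxOn (fun x => ⟪x, d⟫) X v) : supp X d = ⟪v, d⟫ :=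
  IsGreatest.csSup_eq ⟨Set.mem_image_of_mem _ hv, by rintro _ ⟨x, hx, rfl⟩; exact hmax hx⟩

theorem exists_mem_extremePoints_supp_eq_inner (hc : IsCompact X) (hne : X.Nonempty)
    (d : EuclideanSpace ℝ (Fin n)) : ∃ v ∈ X.extremePoints ℝ, supp X d = ⟪v, d⟫ := by
  obtain ⟨v, hv, hmax⟩ := hc.exists_mem_extremePoints_isMaxOn hne (innerSL ℝ d)
  refine ⟨v, hv, supp_eq_inner_of_isMaxOn hv.1 fun x hx => ?_⟩
  simpa only [innerSL_apply_apply, real_inner_comm d] using hmax hx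

theorem supp_eq_inner_of_extremePoints_diff_eq_singleton (hc : IsCompact X) (hne : X.Nonempty)
    {W : Set (EuclideanSpace ℝ (Fin n))} {v₀ d : EuclideanSpace ℝ (Fin n)}
    (hv₀ : X.extremePoints ℝ \ W = {v₀}) (hW : ∀ w ∈ W, ⟪w, d⟫ ≠ supp X d) :
    supp X d = ⟪v₀, d⟫ := by
  obtain ⟨v, hv, hsupp⟩ := exists_mem_extremePoints_supp_eq_inner hc hne d
  have hvW : v ∉ W := fun h => hW v h hsupp.symm
  have hv' : v ∈ X.extremePoints ℝ \ W := ⟨hv, hvW⟩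
  rw [hv₀, Set.mem_singleton_iff] at hv'
  rwa [← hv']

end Support

/-- improved stopping rule: if `W` consists of `n_v - 1` of the `n_v`
vertices of the polytope `X ⊆ ℝ²`, and `d¹, d²` are linearly independent directions
whose generated support lines `L(dⁱ) = {v : ⟪v, dⁱ⟫ = h_X(dⁱ)}` contain no point of `W`,
then the unique remaining vertex is the unique intersection point of the two lines,
i.e. `V \ W = L(d¹) ∩ L(d²)`. -/
theorem stmt_4 (n_v : ℕ) (hnv : 1 ≤ n_v) (X : Set (EuclideanSpace ℝ (Fin 2)))
    (hX : IsPolytope X)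
    (V : Set (EuclideanSpace ℝ (Fin 2))) (hV : V = Set.extremePoints ℝ X)
    (hVcard : V.ncard = n_v)
    (W : Set (EuclideanSpace ℝ (Fin 2))) (hWV : W ⊆ V) (hWcard : W.ncard = n_v - 1)
    (d1 d2 : EuclideanSpace ℝ (Fin 2)) (hind : LinearIndependent ℝ ![d1, d2])
    (h1 : ∀ w ∈ W, ⟪w, d1⟫ ≠ supp X d1)
    (h2 : ∀ w ∈ W, ⟪w, d2⟫ ≠ supp X d2) :
    V \ W = {v | ⟪v, d1⟫ = supp X d1} ∩ {v | ⟪v, d2⟫ = supp X d2} := by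
  have hVfin : V.Finite := hV ▸ hX.finite_extremePoints_s4
  obtain ⟨v₀, hv₀⟩ : ∃ v₀, V \ W = {v₀} := by
    refine Set.ncard_eq_one.mp ?_
    rw [Set.ncard_sdiff hWV (hVfin.subset hWV), hVcard, hWcard]
    omega
  subst hV
  have hs1 := supp_eq_inner_of_extremePoints_diff_eq_singleton hX.isCompact_s4 hX.nonempty_s4 hv₀ h1
  have hs2 := supp_eq_inner_of_extremePoints_diff_eq_singleton hX.isCompact_s4 hX.nonempty_s4 hv₀ h2
  rw [hv₀, hs1, hs2]
  ext x
  refine ⟨by rintro rfl; exact ⟨rfl, rfl⟩, fun ⟨hx1, hx2⟩ => ?_⟩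
  refine ext_inner_of_linearIndependent hind (by simp [finrank_euclideanSpace]) fun i => ?_
  fin_cases i
  exacts [hx1, hx2]
end

section
/- Let n ≥ 2 and let X ⊆ ℝⁿ be a polytope with exactly 3 vertices (extreme points). Then there exists a finite set D ⊆ ℝⁿ of directions with |D| ≤ 5n - 1 such that D determines X within the class of all polytopes in ℝⁿ having at most 3 extreme points. (Convergence of Algorithm 3 in the case n_v = 3 with known bound n̄ = 3: it terminates after at most 5n - 1 oracle calls with X_v = S_v.) -/
open RealInnerProductSpace

/-!
Write `X = conv {a, b, c}`; three distinct extreme points are never collinear, so `X` is a genuine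
triangle. As directions take the three outer edge normals, at each vertex a direction in which that
vertex is the unique maximiser, and `±` a basis of the orthogonal complement of the plane of the
triangle: `6 + 2 (n - 2) = 2n + 2 ≤ 5n - 1` directions. If a polytope `Y` has the same support
numbers, the edge normals and the `±` basis vectors confine `Y` to the plane and the three
half-planes cutting out `X`, so `Y ⊆ X`; and a point of `Y` maximising a vertex direction lies in
`X`, hence is that vertex. So the three vertices lie in `Y`, and `X ⊆ Y` by convexity.
-/

open Pointwise

section Collinear

variable {E : Type*} [AddCommGroup E] [Module ℝ E]

lemma not_collinear_of_mem_extremePoints {A : Set E} {a b c : E} (ha : a ∈ A.extremePoints ℝ)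
    (hb : b ∈ A.extremePoints ℝ) (hc : c ∈ A.extremePoints ℝ) (hab : a ≠ b) (hac : a ≠ c)
    (hbc : b ≠ c) : ¬Collinear ℝ ({a, b, c} : Set E) := by
  have key : ∀ {x y z}, x ∈ A → y ∈ A.extremePoints ℝ → z ∈ A → Wbtw ℝ x y z → x = y ∨ z = y :=
    fun hx hy hz h => (mem_extremePoints_iff_forall_segment.1 hy).2 _ hx _ hz h.mem_segment
  intro h
  rcases h.wbtw_or_wbtw_or_wbtw with h | h | h
  · rcases key ha.1 hb hc.1 h with h | h <;> tauto
  · rcases key hb.1 hc ha.1 h with h | h <;> tauto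
  · rcases key hc.1 ha hb.1 h with h | h <;> tauto

end Collinear

section InnerProductSpace

variable {E : Type*} [NormedAddCommGroup E] [InnerProductSpace ℝ E]

lemma Submodule.exists_mem_orthogonal_inner_neg {K : Submodule ℝ E} [K.HasOrthogonalProjection]
    {v : E} (hv : v ∉ K) : ∃ ν ∈ Kᗮ, ⟪v, ν⟫ < 0 := by
  rw [← K.orthogonal_orthogonal, Submodule.mem_orthogonal] at hv
  push Not at hv
  obtain ⟨ν, hν, hne⟩ := hv
  rw [real_inner_comm] at hne
  rcases hne.lt_or_gt with hneg | hpos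
  · exact ⟨ν, hν, hneg⟩
  · exact ⟨-ν, Kᗮ.neg_mem hν, by rwa [inner_neg_right, neg_lt_zero]⟩

lemma exists_inner_eq_and_inner_lt_of_not_collinear {a b c : E}
    (h : ¬Collinear ℝ ({a, b, c} : Set E)) : ∃ ν, ⟪b, ν⟫ = ⟪a, ν⟫ ∧ ⟪c, ν⟫ < ⟪a, ν⟫ := by
  have hc : c -ᵥ a ∉ vectorSpan ℝ ({a, b} : Set E) := by
    rw [← direction_affineSpan,
      AffineSubspace.vsub_right_mem_direction_iff_mem (mem_affineSpan ℝ (by simp))]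
    intro hc
    apply h
    rw [show ({a, b, c} : Set E) = {c, a, b} by ext; simp; tauto,
      collinear_insert_iff_of_mem_affineSpan hc]
    exact collinear_pair ℝ a b
  obtain ⟨ν, hν, hcν⟩ := Submodule.exists_mem_orthogonal_inner_neg hc
  have hbν : ⟪b -ᵥ a, ν⟫ = 0 :=
    (Submodule.mem_orthogonal _ ν).1 hν _ (vsub_mem_vectorSpan ℝ (by simp) (by simp))
  rw [vsub_eq_sub, inner_sub_left] at hbν hcν
  exact ⟨ν, by linarith, by linarith⟩

lemma exists_inner_lt_and_inner_lt_of_not_collinear {a b c : E}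
    (h : ¬Collinear ℝ ({a, b, c} : Set E)) : ∃ u, ⟪b, u⟫ < ⟪a, u⟫ ∧ ⟪c, u⟫ < ⟪a, u⟫ := by
  obtain ⟨ν, hbν, hcν⟩ := exists_inner_eq_and_inner_lt_of_not_collinear h
  obtain ⟨μ, hcμ, hbμ⟩ := exists_inner_eq_and_inner_lt_of_not_collinear (a := a) (b := c) (c := b)
    (by rwa [Set.pair_comm])
  refine ⟨ν + μ, ?_, ?_⟩ <;> simp only [inner_add_right] <;> linarith

lemma finrank_orthogonal_vectorSpan_add_two_le [FiniteDimensional ℝ E] {s : Set E}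
    (h : ¬Collinear ℝ s) :
    Module.finrank ℝ (vectorSpan ℝ s)ᗮ + 2 ≤ Module.finrank ℝ E := by
  rw [collinear_iff_finrank_le_one, not_le] at h
  have := (vectorSpan ℝ s).finrank_add_finrank_orthogonal
  omega

lemma eq_of_mem_convexHull_insert_of_inner_le {x y u : E} {t : Set E}
    (ht : ∀ z ∈ t, ⟪z, u⟫ < ⟪x, u⟫) (hy : y ∈ convexHull ℝ (insert x t)) (hxy : ⟪x, u⟫ ≤ ⟪y, u⟫) :
    y = x := by
  rcases t.eq_empty_or_nonempty with rfl | hne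
  · simpa using hy
  rw [convexHull_insert hne, mem_convexJoin] at hy
  obtain ⟨x', hx', z, hz, θ, μ, hθ, hμ, hθμ, rfl⟩ := hy
  rw [Set.mem_singleton_iff.1 hx'] at hxy ⊢
  have hzu : ⟪z, u⟫ < ⟪x, u⟫ := convexHull_min ht (convex_halfSpace_lt (f := (⟪·, u⟫))
    ⟨fun v w => inner_add_left v w u, fun r v => real_inner_smul_left v u r⟩ _) hz
  rw [inner_add_left, real_inner_smul_left, real_inner_smul_left] at hxy
  obtain rfl : θ = 1 - μ := by linarith
  have hμ' : μ * (⟪x, u⟫ - ⟪z, u⟫) ≤ 0 := by linarith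
  obtain rfl : μ = 0 := le_antisymm (nonpos_of_mul_nonpos_left hμ' (sub_pos.2 hzu)) hμ
  simp

lemma mem_convexHull_of_mem_affineSpan_of_inner_le {a b c y νa νb νc : E}
    (hy : y ∈ affineSpan ℝ {a, b, c})
    (hνa : ⟪c, νa⟫ = ⟪b, νa⟫ ∧ ⟪a, νa⟫ < ⟪b, νa⟫) (hya : ⟪y, νa⟫ ≤ ⟪b, νa⟫)
    (hνb : ⟪a, νb⟫ = ⟪c, νb⟫ ∧ ⟪b, νb⟫ < ⟪c, νb⟫) (hyb : ⟪y, νb⟫ ≤ ⟪c, νb⟫)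
    (hνc : ⟪b, νc⟫ = ⟪a, νc⟫ ∧ ⟪c, νc⟫ < ⟪a, νc⟫) (hyc : ⟪y, νc⟫ ≤ ⟪a, νc⟫) :
    y ∈ convexHull ℝ {a, b, c} := by
  have hrange : Set.range ![a, b, c] = {a, b, c} := by
    ext; simp; tauto
  rw [← hrange] at hy ⊢
  obtain ⟨w, hw, rfl⟩ := eq_affineCombination_of_mem_affineSpan_of_fintype hy
  have hinner : ∀ ν, ⟪Finset.univ.affineCombination ℝ ![a, b, c] w, ν⟫ =
      w 0 * ⟪a, ν⟫ + w 1 * ⟪b, ν⟫ + w 2 * ⟪c, ν⟫ := fun ν => by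
    rw [Finset.affineCombination_eq_linear_combination _ _ _ hw, Fin.sum_univ_three]
    simp [inner_add_left, real_inner_smul_left]
  rw [Fin.sum_univ_three] at hw
  rw [hinner, hνa.1] at hya
  rw [hinner, hνb.1] at hyb
  rw [hinner, hνc.1] at hyc
  have h0 : 0 ≤ w 0 := nonneg_of_mul_nonpos_left
    (by linear_combination hya - ⟪b, νa⟫ * hw) (sub_neg.2 hνa.2)
  have h1 : 0 ≤ w 1 := nonneg_of_mul_nonpos_left
    (by linear_combination hyb - ⟪c, νb⟫ * hw) (sub_neg.2 hνb.2)
  have h2 : 0 ≤ w 2 := nonneg_of_mul_nonpos_left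
    (by linear_combination hyc - ⟪a, νc⟫ * hw) (sub_neg.2 hνc.2)
  refine affineCombination_mem_convexHull (fun i _ => ?_) (by simpa [Fin.sum_univ_three] using hw)
  fin_cases i <;> assumption

end InnerProductSpace

section Support

variable {n : ℕ}

lemma IsPolytope.isCompact_s13 {X : Set (EuclideanSpace ℝ (Fin n))} (h : IsPolytope X) :
    IsCompact X := by
  obtain ⟨F, -, rfl⟩ := h
  exact F.finite_toSet.isCompact_convexHull ℝ

lemma IsPolytope.convex_s13 {X : Set (EuclideanSpace ℝ (Fin n))} (h : IsPolytope X) :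
    Convex ℝ X := by
  obtain ⟨F, -, rfl⟩ := h
  exact convex_convexHull ℝ _

lemma IsPolytope.nonempty_s13 {X : Set (EuclideanSpace ℝ (Fin n))} (h : IsPolytope X) :
    X.Nonempty := by
  obtain ⟨F, hF, rfl⟩ := h
  exact hF.to_set.convexHull

lemma IsPolytope.eq_convexHull_extremePoints {X : Set (EuclideanSpace ℝ (Fin n))}
    (h : IsPolytope X) : X = convexHull ℝ (X.extremePoints ℝ) := by
  obtain ⟨F, -, rfl⟩ := h
  have hfin : ((convexHull ℝ (F : Set _)).extremePoints ℝ).Finite :=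
    F.finite_toSet.subset extremePoints_convexHull_subset
  exact (closure_convexHull_extremePoints (F.finite_toSet.isCompact_convexHull ℝ)
    (convex_convexHull ℝ _)).symm.trans (hfin.isCompact_convexHull ℝ).isClosed.closure_eq

lemma IsCompact.inner_le_supp {X : Set (EuclideanSpace ℝ (Fin n))} (hX : IsCompact X)
    {y : EuclideanSpace ℝ (Fin n)} (hy : y ∈ X) (d : EuclideanSpace ℝ (Fin n)) :
    ⟪y, d⟫ ≤ supp X d :=
  le_csSup ((hX.image (by fun_prop)).bddAbove) ⟨y, hy, rfl⟩

lemma IsCompact.exists_inner_eq_supp {X : Set (EuclideanSpace ℝ (Fin n))} (hX : IsCompact X)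
    (hne : X.Nonempty) (d : EuclideanSpace ℝ (Fin n)) : ∃ y ∈ X, ⟪y, d⟫ = supp X d :=
  (hX.image (by fun_prop)).sSup_mem (hne.image _)

lemma supp_convexHull_eq_inner {s : Set (EuclideanSpace ℝ (Fin n))}
    {x d : EuclideanSpace ℝ (Fin n)} (hx : x ∈ s) (h : ∀ z ∈ s, ⟪z, d⟫ ≤ ⟪x, d⟫) :
    supp (convexHull ℝ s) d = ⟪x, d⟫ := by
  refine IsGreatest.csSup_eq ⟨⟨x, subset_convexHull ℝ s hx, rfl⟩, ?_⟩
  rintro _ ⟨z, hz, rfl⟩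
  exact convexHull_min h (convex_halfSpace_le (f := (⟪·, d⟫))
    ⟨fun v w => inner_add_left v w d, fun r v => real_inner_smul_left v d r⟩ _) hz

end Support

section NormalDirections

variable {n : ℕ}

noncomputable def normalBasis (s : Set (EuclideanSpace ℝ (Fin n))) :
    Finset (EuclideanSpace ℝ (Fin n)) :=
  Finset.univ.image fun i => (Module.finBasis ℝ (vectorSpan ℝ s)ᗮ i : EuclideanSpace ℝ (Fin n))

lemma card_normalBasis_le (s : Set (EuclideanSpace ℝ (Fin n))) :
    (normalBasis s).card ≤ Module.finrank ℝ (vectorSpan ℝ s)ᗮ :=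
  Finset.card_image_le.trans (by simp)

lemma normalBasis_subset_orthogonal (s : Set (EuclideanSpace ℝ (Fin n))) :
    ↑(normalBasis s) ⊆ ((vectorSpan ℝ s)ᗮ : Set (EuclideanSpace ℝ (Fin n))) := by
  simp [normalBasis, Set.range_subset_iff]

lemma mem_affineSpan_of_forall_normalBasis {s : Set (EuclideanSpace ℝ (Fin n))}
    {x y : EuclideanSpace ℝ (Fin n)} (hx : x ∈ s) (h : ∀ w ∈ normalBasis s, ⟪y, w⟫ = ⟪x, w⟫) :
    y ∈ affineSpan ℝ s := by
  rw [← AffineSubspace.vsub_right_mem_direction_iff_mem (mem_affineSpan ℝ hx),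
    direction_affineSpan, ← (vectorSpan ℝ s).orthogonal_orthogonal, Submodule.mem_orthogonal']
  intro u hu
  have hφ : (innerₛₗ ℝ (y - x)).comp (vectorSpan ℝ s)ᗮ.subtype = 0 :=
    (Module.finBasis ℝ (vectorSpan ℝ s)ᗮ).ext fun i => by
      simp [h _ (Finset.mem_image_of_mem _ (Finset.mem_univ i))]
  simpa [inner_sub_left] using LinearMap.congr_fun hφ ⟨u, hu⟩

lemma supp_convexHull_of_mem_orthogonal {s : Set (EuclideanSpace ℝ (Fin n))}
    {x w : EuclideanSpace ℝ (Fin n)} (hx : x ∈ s) (hw : w ∈ (vectorSpan ℝ s)ᗮ) :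
    supp (convexHull ℝ s) w = ⟪x, w⟫ := by
  refine supp_convexHull_eq_inner hx fun z hz => le_of_eq ?_
  have := (Submodule.mem_orthogonal _ w).1 hw _ (vsub_mem_vectorSpan ℝ hz hx)
  rw [vsub_eq_sub, inner_sub_left] at this
  linarith

lemma mem_affineSpan_of_inner_le_supp {s : Set (EuclideanSpace ℝ (Fin n))}
    {x y : EuclideanSpace ℝ (Fin n)} (hx : x ∈ s)
    (h : ∀ d ∈ normalBasis s ∪ -normalBasis s, ⟪y, d⟫ ≤ supp (convexHull ℝ s) d) :
    y ∈ affineSpan ℝ s := by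
  refine mem_affineSpan_of_forall_normalBasis hx fun w hw => le_antisymm ?_ ?_
  · have hwK := normalBasis_subset_orthogonal s hw
    simpa [supp_convexHull_of_mem_orthogonal hx hwK] using
      h w (Finset.mem_union_left _ hw)
  · have hwK := Submodule.neg_mem _ (normalBasis_subset_orthogonal s hw)
    simpa [supp_convexHull_of_mem_orthogonal hx hwK] using
      h (-w) (Finset.mem_union_right _ (Finset.neg_mem_neg hw))

end NormalDirections

section Determination

variable {n : ℕ}

theorem determines_convexHull {s : Set (EuclideanSpace ℝ (Fin n))}
    {D : Finset (EuclideanSpace ℝ (Fin n))}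
    (hcut : {y | ∀ d ∈ D, ⟪y, d⟫ ≤ supp (convexHull ℝ s) d} ⊆ convexHull ℝ s)
    (hexp : ∀ x ∈ s, ∃ d ∈ D, ∀ y ∈ convexHull ℝ s, supp (convexHull ℝ s) d ≤ ⟪y, d⟫ → y = x) :
    Determines {Y | IsPolytope Y} D (convexHull ℝ s) := by
  intro Y hY hD
  have hYX : Y ⊆ convexHull ℝ s := fun y hy =>
    hcut fun d hd => hD d hd ▸ hY.isCompact_s13.inner_le_supp hy d
  refine hYX.antisymm (convexHull_min (fun x hx => ?_) hY.convex_s13)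
  obtain ⟨d, hd, hxd⟩ := hexp x hx
  obtain ⟨y, hy, hyd⟩ := hY.isCompact_s13.exists_inner_eq_supp hY.nonempty_s13 d
  rw [hD d hd] at hyd
  exact hxd y (hYX hy) hyd.ge ▸ hy

lemma supp_convexHull_triple {a b c d : EuclideanSpace ℝ (Fin n)} (hb : ⟪b, d⟫ ≤ ⟪a, d⟫)
    (hc : ⟪c, d⟫ ≤ ⟪a, d⟫) : supp (convexHull ℝ {a, b, c}) d = ⟪a, d⟫ :=
  supp_convexHull_eq_inner (by simp) (by simp [hb, hc])

lemma eq_of_mem_convexHull_triple_of_supp_le {a b c u y : EuclideanSpace ℝ (Fin n)}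
    (hu : ⟪b, u⟫ < ⟪a, u⟫ ∧ ⟪c, u⟫ < ⟪a, u⟫) (hy : y ∈ convexHull ℝ {a, b, c})
    (hle : supp (convexHull ℝ {a, b, c}) u ≤ ⟪y, u⟫) : y = a := by
  rw [supp_convexHull_triple hu.1.le hu.2.le] at hle
  exact eq_of_mem_convexHull_insert_of_inner_le (by simpa using hu) hy hle

theorem exists_determines_convexHull_triple {a b c : EuclideanSpace ℝ (Fin n)}
    (h : ¬Collinear ℝ ({a, b, c} : Set (EuclideanSpace ℝ (Fin n)))) :
    ∃ D : Finset (EuclideanSpace ℝ (Fin n)), D.card ≤ 2 * n + 2 ∧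
      Determines {Y | IsPolytope Y} D (convexHull ℝ {a, b, c}) := by
  have hbca : ({b, c, a} : Set (EuclideanSpace ℝ (Fin n))) = {a, b, c} := by ext; simp; tauto
  have hcab : ({c, a, b} : Set (EuclideanSpace ℝ (Fin n))) = {a, b, c} := by ext; simp; tauto
  obtain ⟨νa, hνa⟩ := exists_inner_eq_and_inner_lt_of_not_collinear (hbca ▸ h)
  obtain ⟨νb, hνb⟩ := exists_inner_eq_and_inner_lt_of_not_collinear (hcab ▸ h)
  obtain ⟨νc, hνc⟩ := exists_inner_eq_and_inner_lt_of_not_collinear h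
  obtain ⟨ua, hua⟩ := exists_inner_lt_and_inner_lt_of_not_collinear h
  obtain ⟨ub, hub⟩ := exists_inner_lt_and_inner_lt_of_not_collinear (hbca ▸ h)
  obtain ⟨uc, huc⟩ := exists_inner_lt_and_inner_lt_of_not_collinear (hcab ▸ h)
  refine ⟨{νa, νb, νc, ua, ub, uc} ∪ (normalBasis {a, b, c} ∪ -normalBasis {a, b, c}), ?_, ?_⟩
  · have h6 := Finset.card_le_six (a := νa) (b := νb) (c := νc) (d := ua) (e := ub) (f := uc)
    have hB := card_normalBasis_le ({a, b, c} : Set (EuclideanSpace ℝ (Fin n)))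
    have hK := finrank_orthogonal_vectorSpan_add_two_le h
    rw [finrank_euclideanSpace_fin] at hK
    grw [Finset.card_union_le, Finset.card_union_le, Finset.card_neg]
    omega
  refine determines_convexHull (fun y hy => ?_) ?_
  · have hya := hy νa (by simp)
    have hyb := hy νb (by simp)
    have hyc := hy νc (by simp)
    rw [← hbca, supp_convexHull_triple hνa.1.le hνa.2.le] at hya
    rw [← hcab, supp_convexHull_triple hνb.1.le hνb.2.le] at hyb
    rw [supp_convexHull_triple hνc.1.le hνc.2.le] at hyc
    exact mem_convexHull_of_mem_affineSpan_of_inner_le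
      (mem_affineSpan_of_inner_le_supp (x := a) (by simp) fun d hd =>
        hy d (Finset.mem_union_right _ hd)) hνa hya hνb hyb hνc hyc
  · simp only [Set.mem_insert_iff, Set.mem_singleton_iff]
    rintro x (rfl | rfl | rfl)
    · exact ⟨ua, by simp, fun y => eq_of_mem_convexHull_triple_of_supp_le hua⟩
    · exact ⟨ub, by simp, fun y => hbca ▸ eq_of_mem_convexHull_triple_of_supp_le hub⟩
    · exact ⟨uc, by simp, fun y => hcab ▸ eq_of_mem_convexHull_triple_of_supp_le huc⟩

end Determination

/-- a polytope `X ⊆ ℝⁿ` (`n ≥ 2`) with exactly `3` vertices is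
determined by at most `5n - 1` directions within the class of polytopes in `ℝⁿ`
with at most `3` extreme points. -/
theorem stmt_13 (n : ℕ) (hn : 2 ≤ n) (X : Set (EuclideanSpace ℝ (Fin n)))
    (hX : IsPolytope X) (hcard : (Set.extremePoints ℝ X).ncard = 3) :
    ∃ D : Finset (EuclideanSpace ℝ (Fin n)), D.card ≤ 5 * n - 1 ∧
      Determines {Y | IsPolytope Y ∧ (Set.extremePoints ℝ Y).ncard ≤ 3} D X := by
  obtain ⟨a, b, c, hab, hac, hbc, hE⟩ := Set.ncard_eq_three.mp hcard
  have hext : ∀ x ∈ ({a, b, c} : Set (EuclideanSpace ℝ (Fin n))), x ∈ X.extremePoints ℝ :=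
    fun x hx => hE ▸ hx
  have hXT : X = convexHull ℝ {a, b, c} := hE ▸ hX.eq_convexHull_extremePoints
  obtain ⟨D, hDcard, hD⟩ := exists_determines_convexHull_triple
    (not_collinear_of_mem_extremePoints (hext a (by simp)) (hext b (by simp)) (hext c (by simp))
      hab hac hbc)
  refine ⟨D, by omega, fun Y hY hYD => ?_⟩
  rw [hXT] at hYD ⊢
  exact hD Y hY.1 hYD
end

section
/- Let n ≥ 1, let v¹, v², v³ ∈ ℝⁿ, and let X = conv{v¹, v², v³}. For i = 1, 2, 3, let xⁱ ∈ ℝⁿ be vⁱ with its last coordinate replaced by 0, and suppose there are real numbers ℓ < u with ℓ ≤ (vⁱ)ₙ ≤ u for all i, where (vⁱ)ₙ denotes the last coordinate of vⁱ. Fix j ∈ {1, 2, 3} and suppose d ∈ ℝⁿ satisfies ⟨d, xʲ + ℓ·eₙ⟩ = 0, ⟨d, xʲ + u·eₙ⟩ = 1, and ⟨d, xⁱ + u·eₙ⟩ = 0 for both i ≠ j (eₙ being the last standard basis vector). Then the support function of X satisfies h_X(d) = ((vʲ)ₙ - ℓ)/(u - ℓ); equivalently, (vʲ)ₙ = ℓ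 + h_X(d)·(u - ℓ). (This is the oracle-call computation used in Case III of Algorithm 3 to recover the last coordinate of each vertex.) -/
open RealInnerProductSpace

/-- oracle-call computation in Case III of Algorithm 3: let
`X = conv{v¹, v², v³} ⊆ ℝ^{n+1}`, let `xⁱ` be `vⁱ` with its last coordinate replaced
by `0`, let `ℓ < u` bound the last coordinates of the `vⁱ`, and suppose `d` satisfies
`⟪d, xʲ + ℓ eₗₐₛₜ⟫ = 0`, `⟪d, xʲ + u eₗₐₛₜ⟫ = 1`, and `⟪d, xⁱ + u eₗₐₛₜ⟫ = 0` for both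
`i ≠ j`. Then `h_X(d) = ((vʲ)ₗₐₛₜ - ℓ) / (u - ℓ)`. -/
theorem stmt_16 (n : ℕ) (v : Fin 3 → EuclideanSpace ℝ (Fin (n + 1)))
    (X : Set (EuclideanSpace ℝ (Fin (n + 1))))
    (hX : X = convexHull ℝ (Set.range v))
    (x : Fin 3 → EuclideanSpace ℝ (Fin (n + 1)))
    (hxlast : ∀ i, x i (Fin.last n) = 0)
    (hxrest : ∀ i, ∀ k : Fin n, x i k.castSucc = v i k.castSucc)
    (ℓ u : ℝ) (hℓu : ℓ < u)
    (hbound : ∀ i, ℓ ≤ v i (Fin.last n) ∧ v i (Fin.last n) ≤ u)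
    (j : Fin 3) (d : EuclideanSpace ℝ (Fin (n + 1)))
    (hd1 : ⟪d, x j + ℓ • EuclideanSpace.single (Fin.last n) 1⟫ = (0 : ℝ))
    (hd2 : ⟪d, x j + u • EuclideanSpace.single (Fin.last n) 1⟫ = (1 : ℝ))
    (hd3 : ∀ i, i ≠ j → ⟪d, x i + u • EuclideanSpace.single (Fin.last n) 1⟫ = (0 : ℝ)) :
    supp X d = (v j (Fin.last n) - ℓ) / (u - ℓ) := by
  have hu : u - ℓ ≠ 0 := by linarith
  set e : EuclideanSpace ℝ (Fin (n + 1)) := EuclideanSpace.single (Fin.last n) 1 with he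
  set s : ℝ := ⟪d, e⟫ with hs
  -- decomposition v i = x i + (v i last) • e
  have hdecomp : ∀ i, v i = x i + v i (Fin.last n) • e := by
    intro i
    ext k
    refine Fin.lastCases ?_ ?_ k
    · simp [he, hxlast i, EuclideanSpace.single_apply]
    · intro k
      have hk : k.castSucc ≠ Fin.last n := Fin.ne_last_of_lt k.castSucc_lt_last
      simp [he, hxrest i k, EuclideanSpace.single_apply, hk, hk.symm]
  have helast : e (Fin.last n) = 1 := by simp [he, EuclideanSpace.single_apply]
  have key : ∀ (i : Fin 3) (t : ℝ), ⟪d, x i + t • e⟫ = ⟪d, x i⟫ + t * s := by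
    intro i t
    rw [inner_add_right, real_inner_smul_right]
  rw [key] at hd1 hd2
  have hsval : s = 1 / (u - ℓ) := by field_simp; linarith
  have hxjval : ⟪d, x j⟫ = -ℓ / (u - ℓ) := by
    rw [hsval] at hd1; field_simp at hd1 ⊢; linarith
  have hvj : ⟪v j, d⟫ = (v j (Fin.last n) - ℓ) / (u - ℓ) := by
    rw [real_inner_comm, hdecomp j, key, hxjval, hsval]
    simp only [PiLp.add_apply, PiLp.smul_apply, hxlast, helast, smul_eq_mul, mul_one, zero_add]
    field_simp; ring
  have hub : ∀ i, ⟪v i, d⟫ ≤ (v j (Fin.last n) - ℓ) / (u - ℓ) := by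
    intro i
    by_cases hij : i = j
    · rw [hij, hvj]
    · have h3 := hd3 i hij
      rw [key] at h3
      have : ⟪v i, d⟫ = (v i (Fin.last n) - u) / (u - ℓ) := by
        rw [real_inner_comm, hdecomp i, key, hsval]
        have : ⟪d, x i⟫ = -u / (u - ℓ) := by
          rw [hsval] at h3; field_simp at h3 ⊢; linarith
        rw [this]
        simp only [PiLp.add_apply, PiLp.smul_apply, hxlast, helast, smul_eq_mul, mul_one, zero_add]
        field_simp; ring
      rw [this]
      have h1 : v i (Fin.last n) - u ≤ 0 := by linarith [(hbound i).2]
      have h2 : (0 : ℝ) ≤ v j (Fin.last n) - ℓ := by linarith [(hbound j).1]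
      have := div_nonpos_of_nonpos_of_nonneg h1 (by linarith : (0:ℝ) ≤ u - ℓ)
      have := div_nonneg h2 (by linarith : (0:ℝ) ≤ u - ℓ)
      linarith
  have hgreat : IsGreatest ((fun w => ⟪w, d⟫) '' X) ((v j (Fin.last n) - ℓ) / (u - ℓ)) := by
    constructor
    · refine ⟨v j, ?_, hvj⟩
      rw [hX]
      exact subset_convexHull ℝ _ ⟨j, rfl⟩
    · rintro y ⟨w, hw, rfl⟩
      have hconv : Convex ℝ {z : EuclideanSpace ℝ (Fin (n + 1)) |
          ⟪z, d⟫ ≤ (v j (Fin.last n) - ℓ) / (u - ℓ)} := by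
        exact convex_halfSpace_le (by exact ⟨fun a b => inner_add_left a b d,
          fun c a => real_inner_smul_left a d c⟩) _
      have hsub : X ⊆ {z : EuclideanSpace ℝ (Fin (n + 1)) |
          ⟪z, d⟫ ≤ (v j (Fin.last n) - ℓ) / (u - ℓ)} := by
        rw [hX]
        apply convexHull_min _ hconv
        rintro _ ⟨i, rfl⟩
        exact hub i
      exact hsub hw
  exact hgreat.csSup_eq
end
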